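/- arXiv:2503.03634 — 3 statements merged into one kernel-verified Lean document; each statement's English description precedes it below -/
import Mathlib

section
/- Let x ∈ ℝ^m, y ∈ ℝ^o, α ∈ ℝ^m, β, γ ∈ ℝ^o with ‖β‖ < 1 and γ ≠ 0. Define f(x, y) = (xᵀα)(γᵀy) + (yᵀβ)(γᵀy). Then f(x, y) ≥ 0 for all x in the closed unit ball of ℝ^m and all y in the closed unit ball of ℝ^o if and only if α = 0 and the matrix βγᵀ is positive semidefinite. -/
open RealInnerProductSpace

theorem stmt_0 (m o : ℕ) (α : EuclideanSpace ℝ (Fin m)) (β γ : EuclideanSpace ℝ (Fin o))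
    (hβ : ‖β‖ < 1) (hγ : γ ≠ 0) :
    (∀ x : EuclideanSpace ℝ (Fin m), ∀ y : EuclideanSpace ℝ (Fin o),
        ‖x‖ ≤ 1 → ‖y‖ ≤ 1 → 0 ≤ ⟪x, α⟫ * ⟪γ, y⟫ + ⟪y, β⟫ * ⟪γ, y⟫) ↔
      (α = 0 ∧ ∀ y : EuclideanSpace ℝ (Fin o), 0 ≤ ⟪y, β⟫ * ⟪γ, y⟫) := by
  have hγn : (0:ℝ) < ‖γ‖ := norm_pos_iff.mpr hγ
  constructor
  · intro h
    constructor
    · by_contra hα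
      have hαn : (0:ℝ) < ‖α‖ := norm_pos_iff.mpr hα
      set t : ℝ := min 1 (‖α‖ / 2) with ht
      have ht0 : 0 < t := lt_min one_pos (by positivity)
      have ht1 : t ≤ 1 := min_le_left _ _
      have ht2 : t ≤ ‖α‖ / 2 := min_le_right _ _
      set x : EuclideanSpace ℝ (Fin m) := (-‖α‖⁻¹) • α with hxdef
      set y : EuclideanSpace ℝ (Fin o) := (t * ‖γ‖⁻¹) • γ with hydef
      have hx : ‖x‖ ≤ 1 := by
        rw [hxdef, norm_smul, norm_neg, norm_inv, norm_norm, inv_mul_cancel₀ hαn.ne']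
      have hy : ‖y‖ ≤ 1 := by
        rw [hydef, norm_smul]
        have : |t * ‖γ‖⁻¹| = t * ‖γ‖⁻¹ := abs_of_pos (by positivity)
        rw [Real.norm_eq_abs, this, mul_assoc, inv_mul_cancel₀ hγn.ne', mul_one]
        exact ht1
      have h1 := h x y hx hy
      have e1 : ⟪x, α⟫ = -‖α‖ := by
        rw [hxdef, real_inner_smul_left, real_inner_self_eq_norm_sq]
        field_simp
      have e2 : ⟪γ, y⟫ = t * ‖γ‖ := by
        rw [hydef, real_inner_smul_right, real_inner_self_eq_norm_sq]
        field_simp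
      have e3 : ⟪y, β⟫ = t * ‖γ‖⁻¹ * ⟪γ, β⟫ := by
        rw [hydef, real_inner_smul_left]
      rw [e1, e2, e3] at h1
      have hcs : ⟪γ, β⟫ ≤ ‖γ‖ * ‖β‖ := real_inner_le_norm γ β
      -- h1 : 0 ≤ -‖α‖ * (t * ‖γ‖) + (t * ‖γ‖⁻¹ * ⟪γ,β⟫) * (t * ‖γ‖)
      have key : ‖α‖ ≤ t * ‖γ‖⁻¹ * ⟪γ, β⟫ := by
        nlinarith [mul_pos ht0 hγn]
      have : t * ‖γ‖⁻¹ * ⟪γ, β⟫ ≤ t * ‖β‖ := by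
        calc t * ‖γ‖⁻¹ * ⟪γ, β⟫ ≤ t * ‖γ‖⁻¹ * (‖γ‖ * ‖β‖) := by
              apply mul_le_mul_of_nonneg_left hcs (by positivity)
          _ = t * ‖β‖ := by field_simp
      nlinarith [norm_nonneg β]
    · intro y
      by_cases hy : y = 0
      · simp [hy]
      · have hyn : (0:ℝ) < ‖y‖ := norm_pos_iff.mpr hy
        have h1 := h 0 (‖y‖⁻¹ • y) (by simp) (by
          rw [norm_smul, norm_inv, norm_norm, inv_mul_cancel₀ hyn.ne'])
        rw [inner_zero_left, zero_mul, zero_add, real_inner_smul_left,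
          real_inner_smul_right] at h1
        have h2 : 0 ≤ ‖y‖⁻¹ * ‖y‖⁻¹ * (⟪y, β⟫ * ⟪γ, y⟫) := by nlinarith
        have h3 : (0:ℝ) < ‖y‖⁻¹ * ‖y‖⁻¹ := by positivity
        by_contra hc
        push_neg at hc
        nlinarith
  · rintro ⟨hα, hpsd⟩ x y hx hy
    rw [hα, inner_zero_right, zero_mul, zero_add]
    exact hpsd y
end

section
/- Let a, w ∈ ℝ^m with w ≠ 0, b ∈ ℝ^o, and r > 0. Suppose that (a·z + b·u)(w·z) ≥ 0 for all z ∈ ℝ^m with ‖z‖ ≤ r and all u ∈ ℝ^o with ‖u‖ ≤ r. Then b = 0. -/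
open RealInnerProductSpace

theorem stmt_4 (m o : ℕ) (a w : EuclideanSpace ℝ (Fin m)) (b : EuclideanSpace ℝ (Fin o))
    (hw : w ≠ 0) (r : ℝ) (hr : 0 < r)
    (h : ∀ z : EuclideanSpace ℝ (Fin m), ∀ u : EuclideanSpace ℝ (Fin o),
        ‖z‖ ≤ r → ‖u‖ ≤ r → 0 ≤ (⟪a, z⟫ + ⟪b, u⟫) * ⟪w, z⟫) :
    b = 0 := by
  by_contra hb
  have hbn : (0:ℝ) < ‖b‖ := norm_pos_iff.mpr hb
  have hwn : (0:ℝ) < ‖w‖ := norm_pos_iff.mpr hw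
  set u : EuclideanSpace ℝ (Fin o) := (-(r/‖b‖)) • b with hu
  have hun : ‖u‖ = r := by
    rw [hu, norm_smul]
    simp [abs_of_pos (div_pos hr hbn), div_mul_cancel₀, hbn.ne', hr.le]
  have hbu : ⟪b, u⟫ = -(r * ‖b‖) := by
    rw [hu, real_inner_smul_right, real_inner_self_eq_norm_sq]
    field_simp
  set t : ℝ := min (r/‖w‖) (r*‖b‖/(2*(|⟪a, w⟫|+1))) with ht
  have hd : (0:ℝ) < 2*(|⟪a, w⟫|+1) := by positivity
  have htpos : 0 < t := lt_min (div_pos hr hwn) (div_pos (by positivity) hd)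
  have hz : ‖(t • w : EuclideanSpace ℝ (Fin m))‖ ≤ r := by
    rw [norm_smul, Real.norm_eq_abs, abs_of_pos htpos]
    calc t * ‖w‖ ≤ (r/‖w‖) * ‖w‖ := by
          exact mul_le_mul_of_nonneg_right (min_le_left _ _) hwn.le
      _ = r := by field_simp
  have key := h (t • w) u hz hun.le
  rw [hbu, real_inner_smul_right, real_inner_smul_right,
    real_inner_self_eq_norm_sq] at key
  have hfac : 0 ≤ t * ⟪a, w⟫ + -(r * ‖b‖) := by
    by_contra hneg
    push_neg at hneg
    have : (t * ⟪a, w⟫ + -(r * ‖b‖)) * (t * ‖w‖^2) < 0 :=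
      mul_neg_of_neg_of_pos hneg (by positivity)
    linarith
  have h1 : t * ⟪a, w⟫ ≤ t * |⟪a, w⟫| :=
    mul_le_mul_of_nonneg_left (le_abs_self _) htpos.le
  have h2 : t * |⟪a, w⟫| ≤ (r*‖b‖/(2*(|⟪a, w⟫|+1))) * (|⟪a, w⟫|+1) := by
    apply mul_le_mul (min_le_right _ _) (by linarith [abs_nonneg ⟪a, w⟫])
      (abs_nonneg _) (by positivity)
  have h3 : (r*‖b‖/(2*(|⟪a, w⟫|+1))) * (|⟪a, w⟫|+1) = r*‖b‖/2 := by
    field_simp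
  have : (0:ℝ) < r * ‖b‖ := by positivity
  linarith
end

section
/- Let w ∈ ℝ^m with ‖w‖ = 1 and let a ∈ ℝ^m, b ∈ ℝ^o, r > 0. Suppose the indicator functions agree: for all z with ‖z‖ ≤ r and all u with ‖u‖ ≤ r, 𝟙(a·z + b·u > 0) = 𝟙(w·z > 0). Then b = 0 and there exists λ ≥ 0 with a = λw. -/
open RealInnerProductSpace

theorem stmt_13 (m o : ℕ) (w a : EuclideanSpace ℝ (Fin m)) (b : EuclideanSpace ℝ (Fin o))
    (hw : ‖w‖ = 1) (r : ℝ) (hr : 0 < r)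
    (h : ∀ z : EuclideanSpace ℝ (Fin m), ∀ u : EuclideanSpace ℝ (Fin o),
        ‖z‖ ≤ r → ‖u‖ ≤ r →
        (if 0 < ⟪a, z⟫ + ⟪b, u⟫ then (1 : ℝ) else 0) = (if 0 < ⟪w, z⟫ then 1 else 0)) :
    b = 0 ∧ ∃ l : ℝ, 0 ≤ l ∧ a = l • w := by
  have hiff : ∀ z : EuclideanSpace ℝ (Fin m), ∀ u : EuclideanSpace ℝ (Fin o),
      ‖z‖ ≤ r → ‖u‖ ≤ r → (0 < ⟪a, z⟫ + ⟪b, u⟫ ↔ 0 < ⟪w, z⟫) := by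
    intro z u hz hu
    have := h z u hz hu
    constructor
    · intro h1
      by_contra h2
      rw [if_pos h1, if_neg h2] at this
      exact one_ne_zero this
    · intro h2
      by_contra h1
      rw [if_neg h1, if_pos h2] at this
      exact one_ne_zero this.symm
  -- b = 0
  have hb : b = 0 := by
    by_contra hb0
    have hbn : 0 < ‖b‖ := norm_pos_iff.mpr hb0
    have hu : ‖(r / ‖b‖) • b‖ ≤ r := by
      rw [norm_smul]
      simp only [Real.norm_eq_abs, abs_div, abs_norm]
      rw [abs_of_pos hr, div_mul_cancel₀ _ (ne_of_gt hbn)]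
    have := hiff 0 ((r / ‖b‖) • b) (by simp [le_of_lt hr]) hu
    rw [inner_zero_right, inner_zero_right] at this
    have hpos : 0 < ⟪b, (r / ‖b‖) • b⟫ := by
      rw [real_inner_smul_right, real_inner_self_eq_norm_sq]
      positivity
    exact lt_irrefl (0:ℝ) (this.mp (by linarith))
  subst hb
  simp only [inner_zero_left, add_zero] at hiff
  have hiff' : ∀ z : EuclideanSpace ℝ (Fin m), ‖z‖ ≤ r → (0 < ⟪a, z⟫ ↔ 0 < ⟪w, z⟫) := by
    intro z hz
    simpa using hiff z 0 hz (by simp [le_of_lt hr])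
  set l : ℝ := ⟪w, a⟫ with hl
  -- l > 0
  have hlpos : 0 < l := by
    have hz : ‖r • w‖ ≤ r := by rw [norm_smul, hw, mul_one, Real.norm_eq_abs, abs_of_pos hr]
    have h1 : 0 < ⟪w, r • w⟫ := by
      rw [real_inner_smul_right, real_inner_self_eq_norm_sq, hw]
      simpa using hr
    have h2 := (hiff' _ hz).mpr h1
    rw [real_inner_smul_right] at h2
    have h3 : 0 < ⟪a, w⟫ := by nlinarith
    rwa [hl, real_inner_comm]
  -- orthogonal component
  set v : EuclideanSpace ℝ (Fin m) := a - l • w with hv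
  have hwv : ⟪w, v⟫ = 0 := by
    rw [hv, inner_sub_right, real_inner_smul_right, real_inner_self_eq_norm_sq, hw]
    ring
  have hav : ⟪a, v⟫ = ‖v‖ ^ 2 := by
    have : a = l • w + v := by rw [hv]; abel
    rw [this, inner_add_left, real_inner_smul_left, hwv, real_inner_self_eq_norm_sq]
    ring
  have hv0 : v = 0 := by
    by_contra hv0
    have hvn : 0 < ‖v‖ := norm_pos_iff.mpr hv0
    set t : ℝ := r / (2 * ‖v‖) with ht
    set e : ℝ := min (r / 2) (r * ‖v‖ / (4 * l)) with he
    have hepos : 0 < e := lt_min (by linarith) (by positivity)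
    have he2 : e ≤ r / 2 := min_le_left _ _
    have he3 : e ≤ r * ‖v‖ / (4 * l) := min_le_right _ _
    set z : EuclideanSpace ℝ (Fin m) := t • v - e • w with hz
    have hzn : ‖z‖ ≤ r := by
      calc ‖z‖ ≤ ‖t • v‖ + ‖e • w‖ := norm_sub_le _ _
        _ = |t| * ‖v‖ + |e| * ‖w‖ := by rw [norm_smul, norm_smul]; simp
        _ = r / 2 + e := by
            rw [abs_of_pos (by positivity : (0:ℝ) < t), abs_of_pos hepos, hw, mul_one, ht,
              div_mul_eq_mul_div, mul_comm 2 ‖v‖, ← div_div,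
              mul_div_assoc, div_self (ne_of_gt hvn), mul_one]
        _ ≤ r := by linarith
    have hwz : ⟪w, z⟫ = -e := by
      rw [hz, inner_sub_right, real_inner_smul_right, real_inner_smul_right, hwv,
        real_inner_self_eq_norm_sq, hw]
      ring
    have haz : ⟪a, z⟫ = t * ‖v‖ ^ 2 - e * l := by
      rw [hz, inner_sub_right, real_inner_smul_right, real_inner_smul_right, hav, hl,
        real_inner_comm]
    have hnot : ¬ (0 < ⟪a, z⟫) := by
      rw [hiff' z hzn, hwz]; linarith
    apply hnot
    rw [haz]
    have htv : t * ‖v‖ ^ 2 = r * ‖v‖ / 2 := by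
      rw [ht]; field_simp
    have hel : e * l ≤ r * ‖v‖ / 4 := by
      have h4 : r * ‖v‖ / (4 * l) * l = r * ‖v‖ / 4 := by
        field_simp
      nlinarith [mul_le_mul_of_nonneg_right he3 hlpos.le]
    linarith [mul_pos hr hvn]
  have hav' : a = l • w := by
    rw [hv] at hv0
    exact sub_eq_zero.mp hv0
  exact ⟨rfl, l, le_of_lt hlpos, hav'⟩
end
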